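/- Let p be an odd prime, s a positive integer, and s1, s2 divisors of s with s2 | s1. If a = b = 0, then the number of pairs (x,y) ∈ F_{p^s}^2 with Tr_{F_{p^s}/F_{p^{s1}}}(x^2+y^2)=0 and Tr_{F_{p^s}/F_{p^{s2}}}(ax+by)+c=0 equals p^{2s-s1} + p^{-s1}(p^{s1}-1)G^2 if c = 0, and equals 0 if c ≠ 0, where G^2 = (-1)^{((p-1)/2)s} p^s. -/

import Mathlib

/-!
Fibering over `w = x² + y²`, the count is `∑_{Tr w = 0} #{x² + y² = w}`. With `χ` the quadratic
character of `K = F_q`, `#{x² + y² = w} = ∑_{u + v = w} (1 + χ u)(1 + χ v) = q + J_w`, where the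
convolution `J_w = ∑_u χ(u) χ(w - u)` is `χ(-1)(q - 1)` at `w = 0` and, after scaling `u = w t`, the
Jacobi sum `J(χ, χ) = -χ(-1)` otherwise. The trace kernel has `q / p^{s1}` elements and contains `0`,
and `χ(-1) = (-1)^((p-1)/2 · s)`, whose product with `q` is `G²`. If `c ≠ 0` the linear condition
reads `c = 0`, so there are no solutions.
-/

open Finset

lemma card_sq_add_sq_eq_sum_mul {R : Type*} [CommRing R] [Fintype R] [DecidableEq R] (w : R) :
    #{xy : R × R | xy.1 ^ 2 + xy.2 ^ 2 = w} =
      ∑ u : R, #{x : R | x ^ 2 = u} * #{y : R | y ^ 2 = w - u} := by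
  rw [card_eq_sum_card_fiberwise (f := fun xy : R × R => xy.1 ^ 2) (t := univ)
    fun _ _ => mem_univ _]
  refine sum_congr rfl fun u _ => ?_
  rw [← card_product, filter_filter]
  congr 1
  ext ⟨x, y⟩
  simp only [mem_filter, mem_univ, true_and, mem_product]
  constructor
  · rintro ⟨h, rfl⟩
    exact ⟨rfl, by rw [← h]; ring⟩
  · rintro ⟨rfl, h⟩
    exact ⟨by rw [h]; ring, rfl⟩

section QuadraticChar

variable {F : Type*} [Field F] [Fintype F]

lemma ringChar_ne_two_of_odd_card (h : Odd (Fintype.card F)) : ringChar F ≠ 2 := by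
  rw [Ne, FiniteField.even_card_iff_char_two, ← Nat.even_iff]
  exact Nat.not_even_iff_odd.mpr h

variable [DecidableEq F]

lemma quadraticChar_neg_one_of_card_eq_pow {p s : ℕ} (hp : Odd p)
    (hcard : Fintype.card F = p ^ s) :
    quadraticChar F (-1) = (-1) ^ ((p - 1) / 2 * s) := by
  have hF : ringChar F ≠ 2 := ringChar_ne_two_of_odd_card (hcard ▸ hp.pow)
  have hp2 : p / 2 = (p - 1) / 2 := by obtain ⟨k, rfl⟩ := hp; omega
  rw [quadraticChar_neg_one hF, hcard, Nat.cast_pow, map_pow,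
    ZMod.χ₄_eq_neg_one_pow (Nat.odd_iff.mp hp), hp2, pow_mul]

lemma sum_quadraticChar_mul_quadraticChar_neg :
    ∑ u : F, quadraticChar F u * quadraticChar F (-u) =
      quadraticChar F (-1) * (Fintype.card F - 1) := by
  have h : ∀ u : F, quadraticChar F u * quadraticChar F (-u) =
      quadraticChar F (-1) * (1 : MulChar F ℤ) u := by
    intro u
    rcases eq_or_ne u 0 with rfl | hu
    · simp [MulChar.map_zero]
    · rw [MulChar.one_apply hu.isUnit, mul_one, neg_eq_neg_one_mul, map_mul, mul_left_comm,
        ← sq, quadraticChar_sq_one hu, mul_one]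
  rw [sum_congr rfl fun u _ => h u, ← mul_sum, MulChar.sum_one_eq_card_units,
    Fintype.card_units, Nat.cast_sub Fintype.card_pos, Nat.cast_one]

variable (hF : ringChar F ≠ 2)
include hF

lemma card_filter_sq_eq (u : F) : (#{x : F | x ^ 2 = u} : ℤ) = quadraticChar F u + 1 := by
  rw [← quadraticChar_card_sqrts hF u, Set.toFinset_ofPred]

lemma sum_quadraticChar_mul_quadraticChar_sub {w : F} (hw : w ≠ 0) :
    ∑ u : F, quadraticChar F u * quadraticChar F (w - u) = -quadraticChar F (-1) := by
  have h : ∀ t : F, quadraticChar F (w * t) * quadraticChar F (w - w * t) =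
      quadraticChar F t * quadraticChar F (1 - t) := by
    intro t
    rw [← mul_one_sub, map_mul, map_mul, mul_mul_mul_comm, ← sq, quadraticChar_sq_one hw,
      one_mul]
  -- substituting `u = w * t` gives the Jacobi sum `J(χ, χ) = J(χ, χ⁻¹) = -χ(-1)`
  rw [← Equiv.sum_comp (Equiv.mulLeft₀ w hw)]
  simp only [Equiv.mulLeft₀_apply, h]
  rw [← jacobiSum_nontrivial_inv (quadraticChar_ne_one hF),
    (quadraticChar_isQuadratic F).inv]
  rfl

lemma card_sq_add_sq_eq (w : F) :
    (#{xy : F × F | xy.1 ^ 2 + xy.2 ^ 2 = w} : ℤ) =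
      Fintype.card F + quadraticChar F (-1) * if w = 0 then (Fintype.card F : ℤ) - 1 else -1 := by
  have hshift : ∑ u : F, quadraticChar F (w - u) = 0 :=
    ((Equiv.subLeft w).sum_comp (quadraticChar F ·)).trans (quadraticChar_sum_zero hF)
  have hconv : ∑ u : F, quadraticChar F u * quadraticChar F (w - u) =
      quadraticChar F (-1) * if w = 0 then (Fintype.card F : ℤ) - 1 else -1 := by
    split_ifs with hw
    · simpa [hw] using sum_quadraticChar_mul_quadraticChar_neg (F := F)
    · rw [sum_quadraticChar_mul_quadraticChar_sub hF hw, mul_neg_one]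
  push_cast [card_sq_add_sq_eq_sum_mul, card_filter_sq_eq hF]
  simp only [add_mul, mul_add, mul_one, one_mul, sum_add_distrib, hshift, hconv,
    quadraticChar_sum_zero hF, sum_const, card_univ, nsmul_eq_mul]
  ring

end QuadraticChar

lemma AddMonoidHom.card_filter_eq_zero_mul_card {G H : Type*} [AddGroup G] [AddGroup H]
    [Fintype G] [Fintype H] [DecidableEq H] (f : G →+ H) (hf : Function.Surjective f) :
    #{x : G | f x = 0} * Fintype.card H = Fintype.card G := by
  have hker : #{x : G | f x = 0} = Nat.card f.ker := by
    rw [Nat.card_eq_fintype_card, Fintype.card_subtype]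
    simp only [AddMonoidHom.mem_ker]
  rw [hker, ← Nat.card_eq_fintype_card, ← Nat.card_eq_fintype_card, ← f.ker.card_mul_index,
    AddSubgroup.index_ker, f.range_eq_top.mpr hf, AddSubgroup.card_top]

section Trace

variable (F : Type*) {K : Type*} [Field F] [Field K] [Fintype F] [Fintype K] [DecidableEq F]
  [Algebra F K]

lemma card_trace_eq_zero_mul_card :
    #{w : K | Algebra.trace F K w = 0} * Fintype.card F = Fintype.card K :=
  (Algebra.trace F K).toAddMonoidHom.card_filter_eq_zero_mul_card (Algebra.trace_surjective F K)

lemma card_trace_sq_add_sq_eq_zero_mul_card [DecidableEq K] (hK : ringChar K ≠ 2) :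
    (#{xy : K × K | Algebra.trace F K (xy.1 ^ 2 + xy.2 ^ 2) = 0} : ℤ) * Fintype.card F =
      Fintype.card K ^ 2 + (Fintype.card F - 1) * quadraticChar K (-1) * Fintype.card K := by
  set T : Finset K := {w | Algebra.trace F K w = 0}
  have hfibres : #{xy : K × K | Algebra.trace F K (xy.1 ^ 2 + xy.2 ^ 2) = 0} =
      ∑ w ∈ T, #{xy : K × K | xy.1 ^ 2 + xy.2 ^ 2 = w} := by
    rw [card_eq_sum_card_fiberwise (f := fun xy : K × K => xy.1 ^ 2 + xy.2 ^ 2) (t := T)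
      fun xy hxy => by simpa [T] using hxy]
    refine sum_congr rfl fun w hw => ?_
    rw [filter_filter]
    congr 1
    ext xy
    simp only [mem_filter, mem_univ, true_and, T] at hw ⊢
    exact ⟨And.right, fun h => ⟨h ▸ hw, h⟩⟩
  have hsum : ∑ w ∈ T, (if w = 0 then (Fintype.card K : ℤ) - 1 else -1) =
      Fintype.card K - #T := by
    have h0 : (0 : K) ∈ T := by simp [T]
    calc _ = ∑ w ∈ T, ((if w = 0 then (Fintype.card K : ℤ) else 0) - 1) :=
        sum_congr rfl fun w _ => by split_ifs <;> ring
      _ = Fintype.card K - #T := by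
        rw [sum_sub_distrib, sum_ite_eq' T, if_pos h0, sum_const, nsmul_one]
  have hker : (#T : ℤ) * Fintype.card F = Fintype.card K := by
    exact_mod_cast card_trace_eq_zero_mul_card F
  push_cast [hfibres, card_sq_add_sq_eq hK, sum_add_distrib, ← mul_sum, hsum]
  rw [sum_const, nsmul_eq_mul]
  linear_combination (Fintype.card K - quadraticChar K (-1)) * hker

end Trace

theorem stmt6_general (p s s1 : ℕ) (hodd : Odd p)
    (F1 F2 K : Type) [Field F1] [Field F2] [Field K]
    [Fintype F1] [Fintype K]
    [DecidableEq F1] [DecidableEq F2] [DecidableEq K]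
    [Algebra F1 K] [Algebra F2 K]
    (hcard1 : Fintype.card F1 = p ^ s1)
    (hcard : Fintype.card K = p ^ s)
    (a b : K) (ha : a = 0) (hb : b = 0) (c : F2) :
    let G2 : ℤ := (-1) ^ (((p - 1) / 2) * s) * p ^ s
    let N : ℕ := (Finset.univ.filter (fun xy : K × K =>
      Algebra.trace F1 K (xy.1 ^ 2 + xy.2 ^ 2) = 0 ∧
      Algebra.trace F2 K (a * xy.1 + b * xy.2) + c = 0)).card
    (c = 0 → (N : ℤ) * p ^ s1 = p ^ (2 * s) + (p ^ s1 - 1) * G2) ∧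
    (c ≠ 0 → N = 0) := by
  intro G2 N
  subst ha hb
  refine ⟨fun hc => ?_, fun hc => ?_⟩
  · have hN : N = #{xy : K × K | Algebra.trace F1 K (xy.1 ^ 2 + xy.2 ^ 2) = 0} := by
      simp [N, hc]
    have key := card_trace_sq_add_sq_eq_zero_mul_card F1
      (ringChar_ne_two_of_odd_card (hcard ▸ hodd.pow))
    rw [quadraticChar_neg_one_of_card_eq_pow hodd hcard, hcard1, hcard, ← hN] at key
    push_cast at key
    rw [key]
    ring
  · simp [N, hc]

/-- when `a = b = 0`, the number of `(x,y) ∈ F_{p^s}²` with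
`Tr_{s1}(x²+y²)=0` and `Tr_{s2}(ax+by)+c=0` equals `p^{2s-s1} + p^{-s1}(p^{s1}-1)G²`
if `c = 0`, and `0` if `c ≠ 0`, where `G² = (-1)^(((p-1)/2)s) p^s`.  (First case
stated multiplied through by `p^{s1}`.) -/
theorem stmt6 (p s s1 s2 : ℕ) (hp : p.Prime) (hodd : Odd p) (hs : 0 < s)
    (hs2 : 0 < s2) (hdvd1 : s1 ∣ s) (hdvd2 : s2 ∣ s1)
    (F1 F2 K : Type) [Field F1] [Field F2] [Field K]
    [Fintype F1] [Fintype F2] [Fintype K]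
    [DecidableEq F1] [DecidableEq F2] [DecidableEq K]
    [Algebra F1 K] [Algebra F2 K]
    (hcard1 : Fintype.card F1 = p ^ s1) (hcard2 : Fintype.card F2 = p ^ s2)
    (hcard : Fintype.card K = p ^ s)
    (a b : K) (ha : a = 0) (hb : b = 0) (c : F2) :
    let G2 : ℤ := (-1) ^ (((p - 1) / 2) * s) * p ^ s
    let N : ℕ := (Finset.univ.filter (fun xy : K × K =>
      Algebra.trace F1 K (xy.1 ^ 2 + xy.2 ^ 2) = 0 ∧
      Algebra.trace F2 K (a * xy.1 + b * xy.2) + c = 0)).card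
    (c = 0 → (N : ℤ) * p ^ s1 = p ^ (2 * s) + (p ^ s1 - 1) * G2) ∧
    (c ≠ 0 → N = 0) :=
  stmt6_general p s s1 hodd F1 F2 K hcard1 hcard a b ha hb c
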